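/- Let V₃ be the digraph on vertices {1,2,3} with arcs (1,2) and (3,2) (the orientation of the path on three vertices whose middle vertex is a sink). Let O be a finite digraph such that (i) every 2-coloring c : V(O) → Fin 2 admits a monochromatic induced copy of V₃, and (ii) for every color i ∈ Fin 3 there exists a V₃-free 3-coloring of O in which exactly one vertex of O receives color i. Let D be any finite digraph, and let D' be obtained from D by adding, for each vertex v of D, a disjoint new copy O_v of O together with all arcs (u,v) for u a vertex of O_v. Then the underlying graph of D admits a proper 3-coloring if and only if D' admits a V₃-free 3-coloring. -/

import Mathlib

/-- A simple digraph on vertex type `V`: no loops and no anti-parallel arcs. -/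
structure Digraph' (V : Type*) : Type _ where
  Adj : V → V → Prop
  loopless : ∀ v, ¬ Adj v v
  asymm : ∀ u v, Adj u v → ¬ Adj v u

/-- An induced copy of the digraph `F` in the digraph `D`, given by the embedding `φ`. -/
def IsInducedCopy {α β : Type*} (F : Digraph' α) (D : Digraph' β) (φ : α → β) : Prop :=
  Function.Injective φ ∧ ∀ u v : α, D.Adj (φ u) (φ v) ↔ F.Adj u v

/-- The image of `φ` is monochromatic under the coloring `c`. -/
def Monochromatic {α β : Type*} {k : ℕ} (c : β → Fin k) (φ : α → β) : Prop :=
  ∃ i : Fin k, ∀ u : α, c (φ u) = i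

/-- The coloring `c` of `D` is `F`-free: no induced copy of `F` in `D` is monochromatic. -/
def IsFFreeColoring {α β : Type*} (F : Digraph' α) (D : Digraph' β) {k : ℕ}
    (c : β → Fin k) : Prop :=
  ∀ φ : α → β, IsInducedCopy F D φ → ¬ Monochromatic c φ

/-- A digraph is acyclic if it contains no directed cycle. -/
def Digraph'.Acyclic {β : Type*} (D : Digraph' β) : Prop :=
  ∀ v : β, ¬ Relation.TransGen D.Adj v v

/-- The underlying simple graph of a digraph. -/
def Digraph'.underlying {V : Type*} (D : Digraph' V) : SimpleGraph V where
  Adj u v := D.Adj u v ∨ D.Adj v u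
  symm := ⟨by intros; exact Or.symm ‹_›⟩
  loopless := ⟨by intro v h; exact h.elim (D.loopless v) (D.loopless v)⟩

/-- The orientation of the path on three vertices `0, 1, 2` whose middle vertex `1` is a
sink: arcs `(0, 1)` and `(2, 1)` (vertices `1,2,3` of the statement are `0,1,2` here). -/
def V3sink : Digraph' (Fin 3) where
  Adj u v := (u = 0 ∧ v = 1) ∨ (u = 2 ∧ v = 1)
  loopless := by decide
  asymm := by decide

/-- The arc relation of the digraph `D'` obtained from `D` by adding, for each vertex `v` of
`D`, a disjoint copy of `O` together with all arcs `(u, v)` for `u` a vertex of that copy. -/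
def attachMinusRel {V ω : Type*} (D : Digraph' V) (O : Digraph' ω) :
    (V ⊕ (V × ω)) → (V ⊕ (V × ω)) → Prop
  | Sum.inl u, Sum.inl v => D.Adj u v
  | Sum.inl _, Sum.inr _ => False
  | Sum.inr (w, _), Sum.inl v => v = w
  | Sum.inr (v, u), Sum.inr (v', u') => v = v' ∧ O.Adj u u'

/-! If `c` properly colors `D`, color each `O_v` by a `V₃`-free coloring of `O` in which only one
vertex gets the color `c v`: an induced `V₃` of `D'` either contains an arc of `D`, lies inside one
`O_v`, or has middle vertex `v ∈ D` and both ends in `O_v`; the first two are not monochromatic,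
and in the last one the two ends would both be the unique vertex of `O_v` colored `c v`.
Conversely, if an arc `u → v` of `D` were monochromatic in a `V₃`-free coloring of `D'`, every
vertex `x` of `O_v` would avoid the color of `v` (else `u → v ← x` is a monochromatic `V₃`), so
`O_v` would be `2`-colored without a monochromatic `V₃`. -/

section InducedCopy

variable {α β γ : Type*} {F : Digraph' α} {D : Digraph' β} {E : Digraph' γ}

theorem IsInducedCopy.comp {φ : α → β} {ι : β → γ} (hι : IsInducedCopy D E ι)
    (hφ : IsInducedCopy F D φ) : IsInducedCopy F E (ι ∘ φ) :=
  ⟨hι.1.comp hφ.1, fun u v => (hι.2 (φ u) (φ v)).trans (hφ.2 u v)⟩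

theorem IsInducedCopy.of_comp {φ : α → β} {ι : β → γ} (hι : IsInducedCopy D E ι)
    (hιφ : IsInducedCopy F E (ι ∘ φ)) : IsInducedCopy F D φ :=
  ⟨hιφ.1.of_comp, fun u v => (hι.2 (φ u) (φ v)).symm.trans (hιφ.2 u v)⟩

theorem IsFFreeColoring.comp {k : ℕ} {c : γ → Fin k} {ι : β → γ} (hc : IsFFreeColoring F E c)
    (hι : IsInducedCopy D E ι) : IsFFreeColoring F D (c ∘ ι) :=
  fun φ hφ => hc (ι ∘ φ) (hι.comp hφ)

end InducedCopy

theorem exists_fin_two_leftInvOn_compl_singleton (i : Fin 3) :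
    ∃ (f : Fin 3 → Fin 2) (g : Fin 2 → Fin 3), Set.LeftInvOn g f {i}ᶜ := by
  refine ⟨fun a => if a = i + 1 then 0 else 1, fun j => if j = 0 then i + 1 else i + 2, ?_⟩
  simp only [Set.LeftInvOn, Set.mem_compl_singleton_iff]
  revert i
  decide

/-- A `3`-coloring missing a color is in effect a `2`-coloring. -/
theorem not_isFFreeColoring_of_forall_ne {α ω : Type*} {F : Digraph' α} {O : Digraph' ω}
    (hO2 : ∀ c : ω → Fin 2, ∃ φ : α → ω, IsInducedCopy F O φ ∧ Monochromatic c φ)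
    {c : ω → Fin 3} {i : Fin 3} (hi : ∀ x, c x ≠ i) : ¬ IsFFreeColoring F O c := by
  obtain ⟨f, g, hgf⟩ := exists_fin_two_leftInvOn_compl_singleton i
  obtain ⟨φ, hφ, j, hj⟩ := hO2 (f ∘ c)
  exact fun hc => hc φ hφ ⟨g j, fun a => by rw [← hj a]; exact (hgf (hi _)).symm⟩

theorem IsInducedCopy.V3sink_adj {β : Type*} {D : Digraph' β} {φ : Fin 3 → β}
    (hφ : IsInducedCopy V3sink D φ) : D.Adj (φ 0) (φ 1) ∧ D.Adj (φ 2) (φ 1) :=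
  ⟨(hφ.2 0 1).2 (Or.inl ⟨rfl, rfl⟩), (hφ.2 2 1).2 (Or.inr ⟨rfl, rfl⟩)⟩

theorem isInducedCopy_V3sink {β : Type*} {D : Digraph' β} {a b c : β} (hac : a ≠ c)
    (hab : D.Adj a b) (hcb : D.Adj c b) (hnac : ¬ D.Adj a c) (hnca : ¬ D.Adj c a) :
    IsInducedCopy V3sink D ![a, b, c] := by
  have hab' : a ≠ b := by rintro rfl; exact D.loopless a hab
  have hcb' : c ≠ b := by rintro rfl; exact D.loopless c hcb
  refine ⟨fun p q hpq => ?_, fun p q => ?_⟩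
  · fin_cases p <;> fin_cases q <;> simp_all [eq_comm]
  · fin_cases p <;> fin_cases q <;>
      simp [V3sink, D.loopless, hab, hcb, hnac, hnca, D.asymm _ _ hab, D.asymm _ _ hcb]

section Attach

variable {V ω : Type*} {D : Digraph' V} {O : Digraph' ω}

theorem attachMinusRel_inl_right {p : V ⊕ (V × ω)} {v : V} :
    attachMinusRel D O p (.inl v) ↔ (∃ u, p = .inl u ∧ D.Adj u v) ∨ ∃ x, p = .inr (v, x) := by
  rcases p with u | ⟨w, x⟩ <;> simp [attachMinusRel, eq_comm]

theorem attachMinusRel_inr_right {p : V ⊕ (V × ω)} {w : V} {u : ω} :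
    attachMinusRel D O p (.inr (w, u)) ↔ ∃ x, p = .inr (w, x) ∧ O.Adj x u := by
  rcases p with v | ⟨w', x⟩ <;> simp [attachMinusRel]

theorem isInducedCopy_inr_mk {D' : Digraph' (V ⊕ (V × ω))}
    (hD' : ∀ x y, D'.Adj x y ↔ attachMinusRel D O x y) (v : V) :
    IsInducedCopy O D' fun x => .inr (v, x) :=
  ⟨fun _ _ h => by simpa using h, fun x y => by simp [hD', attachMinusRel]⟩

theorem isFFreeColoring_attach {D' : Digraph' (V ⊕ (V × ω))}
    (hD' : ∀ x y, D'.Adj x y ↔ attachMinusRel D O x y) {c : V → Fin 3}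
    (hc : ∀ u v, D.underlying.Adj u v → c u ≠ c v) {σ : Fin 3 → ω → Fin 3}
    (hσ : ∀ i, IsFFreeColoring V3sink O (σ i) ∧ ∃! x, σ i x = i) :
    IsFFreeColoring V3sink D' (Sum.elim c fun p => σ (c p.1) p.2) := by
  rintro φ hφ ⟨m, hm⟩
  obtain ⟨h01, h21⟩ := hφ.V3sink_adj
  rw [hD'] at h01 h21
  rcases h1 : φ 1 with v | ⟨w, u⟩ <;> rw [h1] at h01 h21
  · have hm1 : c v = m := by simpa [h1] using hm 1
    rw [attachMinusRel_inl_right] at h01 h21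
    rcases h01 with ⟨a, h0, hav⟩ | ⟨x, h0⟩
    · exact hc a v (Or.inl hav) (by simpa [h0, hm1] using hm 0)
    rcases h21 with ⟨b, h2, hbv⟩ | ⟨y, h2⟩
    · exact hc b v (Or.inl hbv) (by simpa [h2, hm1] using hm 2)
    have hxy : x = y :=
      (hσ (c v)).2.unique (by simpa [h0, hm1] using hm 0) (by simpa [h2, hm1] using hm 2)
    exact absurd (hφ.1 (h0.trans (hxy ▸ h2.symm))) (by decide)
  · rw [attachMinusRel_inr_right] at h01 h21
    obtain ⟨x, h0, -⟩ := h01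
    obtain ⟨y, h2, -⟩ := h21
    have hφw : φ = (fun z => .inr (w, z)) ∘ ![x, u, y] := by
      funext a
      fin_cases a <;> simp [h0, h1, h2]
    subst hφw
    exact (hσ (c w)).1 _ ((isInducedCopy_inr_mk hD' w).of_comp hφ) ⟨m, hm⟩

theorem underlying_adj_color_ne_of_isFFreeColoring {D' : Digraph' (V ⊕ (V × ω))}
    (hO2 : ∀ c : ω → Fin 2, ∃ φ : Fin 3 → ω, IsInducedCopy V3sink O φ ∧ Monochromatic c φ)
    (hD' : ∀ x y, D'.Adj x y ↔ attachMinusRel D O x y) {c : V ⊕ (V × ω) → Fin 3}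
    (hc : IsFFreeColoring V3sink D' c) :
    ∀ u v, D.underlying.Adj u v → c (.inl u) ≠ c (.inl v) := by
  suffices h : ∀ u v, D.Adj u v → c (.inl u) ≠ c (.inl v) by
    rintro u v (huv | hvu)
    exacts [h u v huv, (h v u hvu).symm]
  intro u v huv heq
  have hv : ∀ x, c (.inr (v, x)) ≠ c (.inl v) := by
    intro x hx
    have huv' : u ≠ v := by rintro rfl; exact D.loopless u huv
    refine hc ![.inl u, .inl v, .inr (v, x)] (isInducedCopy_V3sink ?_ ?_ ?_ ?_ ?_)
      ⟨c (.inl v), fun a => ?_⟩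
    · simp
    · simpa [hD', attachMinusRel] using huv
    · simp [hD', attachMinusRel]
    · simp [hD', attachMinusRel]
    · simpa [hD', attachMinusRel] using huv'
    · fin_cases a <;> simp [heq, hx]
  exact not_isFFreeColoring_of_forall_ne hO2 hv (hc.comp (isInducedCopy_inr_mk hD' v))

end Attach

theorem statement6_general {V ω : Type*}
    (O : Digraph' ω)
    (hO2 : ∀ c : ω → Fin 2, ∃ φ : Fin 3 → ω, IsInducedCopy V3sink O φ ∧ Monochromatic c φ)
    (hO3 : ∀ i : Fin 3, ∃ c : ω → Fin 3,
      IsFFreeColoring V3sink O c ∧ ∃! x : ω, c x = i)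
    (D : Digraph' V)
    (D' : Digraph' (V ⊕ (V × ω)))
    (hD' : ∀ x y, D'.Adj x y ↔ attachMinusRel D O x y) :
    (∃ c : V → Fin 3, ∀ u v : V, D.underlying.Adj u v → c u ≠ c v) ↔
      (∃ c : (V ⊕ (V × ω)) → Fin 3, IsFFreeColoring V3sink D' c) := by
  constructor
  · rintro ⟨c, hc⟩
    choose σ hσ using hO3
    exact ⟨_, isFFreeColoring_attach hD' hc hσ⟩
  · rintro ⟨c, hc⟩
    exact ⟨_, underlying_adj_color_ne_of_isFFreeColoring hO2 hD' hc⟩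

/-- Let `O` be a finite digraph such that every `2`-coloring of `O` has a monochromatic
induced copy of `V₃`, and for every color `i` there is a `V₃`-free `3`-coloring of `O` with
exactly one vertex of color `i`. Then the underlying graph of a finite digraph `D` is
properly `3`-colorable iff the digraph `D'`, obtained from `D` by attaching to each vertex
`v` a copy of `O` dominating `v`, admits a `V₃`-free `3`-coloring. -/
theorem statement6 {V ω : Type*} [Fintype V] [Fintype ω]
    (O : Digraph' ω)
    (hO2 : ∀ c : ω → Fin 2, ∃ φ : Fin 3 → ω, IsInducedCopy V3sink O φ ∧ Monochromatic c φ)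
    (hO3 : ∀ i : Fin 3, ∃ c : ω → Fin 3,
      IsFFreeColoring V3sink O c ∧ ∃! x : ω, c x = i)
    (D : Digraph' V)
    (D' : Digraph' (V ⊕ (V × ω)))
    (hD' : ∀ x y, D'.Adj x y ↔ attachMinusRel D O x y) :
    (∃ c : V → Fin 3, ∀ u v : V, D.underlying.Adj u v → c u ≠ c v) ↔
      (∃ c : (V ⊕ (V × ω)) → Fin 3, IsFFreeColoring V3sink D' c) :=
  statement6_general O hO2 hO3 D D' hD'
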